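/- arXiv:2012.04500 — 2 statements merged into one kernel-verified Lean document; each statement's English description precedes it below -/
import Mathlib

section
/- Let F̆ ∈ M̆ with mean m̆ := ∫₀¹ F̆(u)du and standard deviation s̆ := ‖F̆ − m̆‖_{L²} > 0, let ε > 0, and let m ∈ ℝ with |m̆ − m| ≤ ε; write Δm := m̆ − m. Then the supremum of ‖g − m‖_{L²} over all g ∈ M̆_ε satisfying ∫₀¹ g(u)du = m equals s̆ + √(ε² − (Δm)²), and it is attained by the function ḡ(u) := (1 + √(ε² − (Δm)²)/s̆)(F̆(u) − m̆) + m, which belongs to M̆_ε and has ∫₀¹ ḡ(u)du = m. -/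
open MeasureTheory Set

noncomputable section

/-- Lebesgue measure restricted to `[0,1]`. -/
def μ01 : Measure ℝ := volume.restrict (Icc (0:ℝ) 1)

instance : IsFiniteMeasure μ01 := by
  constructor
  simp [μ01, Real.volume_Icc]

/-- The set `M̆` of elements of `L²([0,1])` admitting a nondecreasing representative. -/
def Mqf : Set (Lp ℝ 2 μ01) :=
  {g | ∃ g₀ : ℝ → ℝ, MonotoneOn g₀ (Icc (0:ℝ) 1) ∧ (g : ℝ → ℝ) =ᵐ[μ01] g₀}

/-- The `ε`-Wasserstein ball of quantile functions around `F`. -/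
def Mball (F : Lp ℝ 2 μ01) (ε : ℝ) : Set (Lp ℝ 2 μ01) :=
  {g ∈ Mqf | ‖g - F‖ ≤ ε}

/-! For `g` with mean `m`, `‖g - m‖` is the standard deviation of `g`. Writing `h = g - F̆`, whose
mean is `m - m̆`, split `g - m = (h - E h) + (F̆ - m̆)`: the triangle inequality and the variance
decomposition `‖h‖² = ‖h - E h‖² + (E h)²` give `‖g - m‖ ≤ s̆ + √(ε² - Δm²)`. Equality holds when
`h - E h` is a nonnegative multiple of `F̆ - m̆`, as for `ḡ`, which is an affine image of `F̆` with
nonnegative slope and hence again a quantile function. -/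

instance : IsProbabilityMeasure μ01 := ⟨by simp [μ01, Real.volume_Icc]⟩

open scoped RealInnerProductSpace

namespace MeasureTheory.L2

variable {α : Type*} [MeasurableSpace α] {μ : Measure α}

lemma real_inner_const_left [IsFiniteMeasure μ] (c : ℝ) (f : Lp ℝ 2 μ) :
    ⟪Lp.const 2 μ c, f⟫ = c * ∫ x, f x ∂μ := by
  rw [L2.inner_def, ← integral_const_mul]
  refine integral_congr_ae ?_
  filter_upwards [Lp.coeFn_const 2 μ c] with x hx
  rw [hx, Function.const_apply, real_inner_eq_re_inner]
  simp [mul_comm]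

variable [IsProbabilityMeasure μ]

lemma integral_eq_inner_const_one (f : Lp ℝ 2 μ) : ∫ x, f x ∂μ = ⟪Lp.const 2 μ 1, f⟫ := by
  rw [real_inner_const_left, one_mul]

lemma integral_const (c : ℝ) : ∫ x, Lp.const 2 μ c x ∂μ = c := by
  rw [integral_congr_ae (Lp.coeFn_const 2 μ c)]
  simp

lemma norm_const (c : ℝ) : ‖Lp.const 2 μ c‖ = |c| := by
  rw [Lp.norm_const] <;> simp

lemma integral_sub (f g : Lp ℝ 2 μ) :
    ∫ x, (f - g) x ∂μ = ∫ x, f x ∂μ - ∫ x, g x ∂μ := by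
  simp only [integral_eq_inner_const_one, inner_sub_right]

lemma inner_const_sub_integral (c : ℝ) (f : Lp ℝ 2 μ) :
    ⟪Lp.const 2 μ c, f - Lp.const 2 μ (∫ x, f x ∂μ)⟫ = 0 := by
  rw [inner_sub_right, real_inner_const_left, real_inner_const_left, integral_const, sub_self]

lemma norm_sq_eq_norm_sub_integral_sq_add_sq (f : Lp ℝ 2 μ) :
    ‖f‖ ^ 2 = ‖f - Lp.const 2 μ (∫ x, f x ∂μ)‖ ^ 2 + (∫ x, f x ∂μ) ^ 2 := by
  have h := norm_add_sq_real (f - Lp.const 2 μ (∫ x, f x ∂μ)) (Lp.const 2 μ (∫ x, f x ∂μ))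
  rwa [real_inner_comm, inner_const_sub_integral, sub_add_cancel, norm_const, sq_abs,
    mul_zero, add_zero] at h

lemma integral_smul_sub_integral_add_const (b c : ℝ) (f : Lp ℝ 2 μ) :
    ∫ x, (b • (f - Lp.const 2 μ (∫ x, f x ∂μ)) + Lp.const 2 μ c) x ∂μ = c := by
  rw [integral_eq_inner_const_one, inner_add_right, inner_smul_right, inner_const_sub_integral,
    ← integral_eq_inner_const_one, integral_const, mul_zero, zero_add]

lemma norm_smul_sub_integral_add_const_sq (b c : ℝ) (f : Lp ℝ 2 μ) :
    ‖b • (f - Lp.const 2 μ (∫ x, f x ∂μ)) + Lp.const 2 μ c‖ ^ 2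
      = b ^ 2 * ‖f - Lp.const 2 μ (∫ x, f x ∂μ)‖ ^ 2 + c ^ 2 := by
  rw [norm_add_sq_real, real_inner_smul_left, real_inner_comm, inner_const_sub_integral,
    norm_smul, norm_const, Real.norm_eq_abs, mul_pow, sq_abs, sq_abs]
  ring

lemma norm_sub_integral_le (F g : Lp ℝ 2 μ) :
    ‖g - Lp.const 2 μ (∫ x, g x ∂μ)‖ ≤ ‖F - Lp.const 2 μ (∫ x, F x ∂μ)‖
      + √(‖g - F‖ ^ 2 - (∫ x, g x ∂μ - ∫ x, F x ∂μ) ^ 2) := by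
  have hsplit : g - Lp.const 2 μ (∫ x, g x ∂μ)
      = (g - F - Lp.const 2 μ (∫ x, (g - F) x ∂μ)) + (F - Lp.const 2 μ (∫ x, F x ∂μ)) := by
    rw [integral_sub, map_sub]
    abel
  have hvar : ‖g - F - Lp.const 2 μ (∫ x, (g - F) x ∂μ)‖
      = √(‖g - F‖ ^ 2 - (∫ x, g x ∂μ - ∫ x, F x ∂μ) ^ 2) := by
    rw [← integral_sub, norm_sq_eq_norm_sub_integral_sq_add_sq (g - F), add_sub_cancel_right,
      Real.sqrt_sq (norm_nonneg _)]
  calc ‖g - Lp.const 2 μ (∫ x, g x ∂μ)‖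
      ≤ ‖g - F - Lp.const 2 μ (∫ x, (g - F) x ∂μ)‖ + ‖F - Lp.const 2 μ (∫ x, F x ∂μ)‖ := by
        rw [hsplit]; exact norm_add_le _ _
    _ = _ := by rw [hvar, add_comm]

end MeasureTheory.L2

lemma add_const_mem_Mqf {g : Lp ℝ 2 μ01} (hg : g ∈ Mqf) (c : ℝ) :
    g + Lp.const 2 μ01 c ∈ Mqf := by
  obtain ⟨g₀, hmono, hae⟩ := hg
  refine ⟨fun u => g₀ u + c, fun x hx y hy hxy => add_le_add_left (hmono hx hy hxy) c, ?_⟩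
  filter_upwards [Lp.coeFn_add g (Lp.const 2 μ01 c), Lp.coeFn_const 2 μ01 c, hae]
    with x hadd hc hg
  rw [hadd, Pi.add_apply, hc, hg, Function.const_apply]

lemma smul_mem_Mqf {a : ℝ} (ha : 0 ≤ a) {g : Lp ℝ 2 μ01} (hg : g ∈ Mqf) : a • g ∈ Mqf := by
  obtain ⟨g₀, hmono, hae⟩ := hg
  refine ⟨fun u => a * g₀ u, fun x hx y hy hxy => mul_le_mul_of_nonneg_left (hmono hx hy hxy) ha,
    ?_⟩
  filter_upwards [Lp.coeFn_smul a g, hae] with x hsmul hg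
  rw [hsmul, Pi.smul_apply, hg, smul_eq_mul]

theorem stmt1 (F : Lp ℝ 2 μ01) (hF : F ∈ Mqf) (ε : ℝ) (hε : 0 < ε)
    (mF s m : ℝ) (hmF : mF = ∫ u, F u ∂μ01)
    (hs : s = ‖F - Lp.const 2 μ01 mF‖) (hs0 : 0 < s)
    (hm : |mF - m| ≤ ε) :
    IsGreatest
      ((fun g : Lp ℝ 2 μ01 => ‖g - Lp.const 2 μ01 m‖) ''
        {g ∈ Mball F ε | (∫ u, g u ∂μ01) = m})
      (s + Real.sqrt (ε ^ 2 - (mF - m) ^ 2)) ∧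
    (1 + Real.sqrt (ε ^ 2 - (mF - m) ^ 2) / s) • (F - Lp.const 2 μ01 mF) + Lp.const 2 μ01 m
      ∈ {g ∈ Mball F ε | (∫ u, g u ∂μ01) = m} ∧
    ‖(1 + Real.sqrt (ε ^ 2 - (mF - m) ^ 2) / s) • (F - Lp.const 2 μ01 mF) + Lp.const 2 μ01 m
        - Lp.const 2 μ01 m‖
      = s + Real.sqrt (ε ^ 2 - (mF - m) ^ 2) := by
  set Δ := √(ε ^ 2 - (mF - m) ^ 2)
  have hΔsq : Δ ^ 2 = ε ^ 2 - (mF - m) ^ 2 :=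
    Real.sq_sqrt (sub_nonneg.2 (sq_le_sq' (abs_le.1 hm).1 (abs_le.1 hm).2))
  set G := (1 + Δ / s) • (F - Lp.const 2 μ01 mF) + Lp.const 2 μ01 m with hG
  have hGm : ‖G - Lp.const 2 μ01 m‖ = s + Δ := by
    rw [add_sub_cancel_right, norm_smul, Real.norm_of_nonneg (by positivity), ← hs]
    field_simp
  have hGF : ‖G - F‖ ^ 2 = ε ^ 2 := by
    have : G - F = (Δ / s) • (F - Lp.const 2 μ01 mF) + Lp.const 2 μ01 (m - mF) := by
      rw [map_sub]; module
    rw [this, hmF, L2.norm_smul_sub_integral_add_const_sq, ← hmF, ← hs, div_pow,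
      div_mul_cancel₀ _ (by positivity), hΔsq]
    ring
  have hGmem : G ∈ {g ∈ Mball F ε | (∫ u, g u ∂μ01) = m} := by
    refine ⟨⟨?_, (pow_le_pow_iff_left₀ (norm_nonneg _) hε.le two_ne_zero).1 hGF.le⟩, ?_⟩
    · rw [hG, sub_eq_add_neg, ← map_neg]
      exact add_const_mem_Mqf (smul_mem_Mqf (by positivity) (add_const_mem_Mqf hF _)) _
    · rw [hG, hmF]; exact L2.integral_smul_sub_integral_add_const _ _ _
  refine ⟨⟨⟨G, hGmem, hGm⟩, ?_⟩, hGmem, hGm⟩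
  rintro _ ⟨g, ⟨⟨-, hgF⟩, hg⟩, rfl⟩
  have hle := L2.norm_sub_integral_le F g
  rw [hg, ← hmF, ← hs] at hle
  refine hle.trans (add_le_add_right (Real.sqrt_le_sqrt ?_) s)
  nlinarith [pow_le_pow_left₀ (norm_nonneg _) hgF 2]
end
end

section
/- Let F̆ ∈ M̆ with mean m̆ := ∫₀¹ F̆(u)du and standard deviation s̆ := ‖F̆ − m̆‖_{L²} > 0, let ε > 0, and let m ∈ ℝ with |m̆ − m| ≤ ε; write Δm := m̆ − m. If s̆ ≥ √(ε² − (Δm)²), then the infimum of ‖g − m‖_{L²} over all g ∈ M̆_ε satisfying ∫₀¹ g(u)du = m equals s̆ − √(ε² − (Δm)²) and is attained by g̲(u) := (1 − √(ε² − (Δm)²)/s̆)(F̆(u) − m̆) + m, which belongs to M̆_ε and has mean m. If instead s̆ < √(ε² − (Δm)²), then the constant function g̲ ≡ m belongs to M̆_ε and the infimum equals 0. -/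
/-!
The constant `e = 1` is a unit vector of `L²([0,1])`, the mean of `g` is `⟪e, g⟫` and the
constant `c` is `c • e`. Write `P x = x - ⟪e, x⟫ • e` for the centred part. If `g` has mean `m`,
then `g - F` has mean `m - m̆`, so by Pythagoras `‖P (F - g)‖ ≤ √(ε² - Δm²)`. Since
`g - m = (F - m̆) - P (F - g)`, the triangle inequality gives `‖g - m‖ ≥ s̆ - √(ε² - Δm²)`.
The bound is attained by shrinking `F - m̆` by the factor `1 - √(ε² - Δm²) / s̆` (or to `0` when
that factor would be negative) and adding `m`: `M̆` is a convex cone containing the constants,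
so the result is still a quantile function.
-/

open MeasureTheory Set
open scoped RealInnerProductSpace

noncomputable section

instance inst_s2 : IsProbabilityMeasure μ01 := by
  constructor
  simp [μ01, Real.volume_Icc]

section UnitVector

variable {E : Type*} [NormedAddCommGroup E] [InnerProductSpace ℝ E] {e : E}

lemma inner_sub_inner_smul_self (he : ‖e‖ = 1) (x : E) : ⟪e, x - ⟪e, x⟫ • e⟫ = 0 := by
  rw [inner_sub_right, real_inner_smul_right, real_inner_self_eq_norm_sq, he]
  ring

lemma norm_add_smul_sq_of_inner_eq_zero (he : ‖e‖ = 1) {x : E} (hx : ⟪e, x⟫ = 0) (c : ℝ) :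
    ‖x + c • e‖ ^ 2 = ‖x‖ ^ 2 + c ^ 2 := by
  rw [norm_add_sq_real, real_inner_smul_right, real_inner_comm, hx, norm_smul, he]
  simp

lemma norm_sub_inner_smul_sq (he : ‖e‖ = 1) (x : E) :
    ‖x - ⟪e, x⟫ • e‖ ^ 2 = ‖x‖ ^ 2 - ⟪e, x⟫ ^ 2 := by
  have := norm_add_smul_sq_of_inner_eq_zero he (inner_sub_inner_smul_self he x) ⟪e, x⟫
  rw [sub_add_cancel] at this
  linarith

lemma sub_sqrt_le_norm_sub_smul (he : ‖e‖ = 1) {F g : E} {m ε : ℝ} (hg : ⟪e, g⟫ = m)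
    (hgF : ‖g - F‖ ≤ ε) :
    ‖F - ⟪e, F⟫ • e‖ - √(ε ^ 2 - (⟪e, F⟫ - m) ^ 2) ≤ ‖g - m • e‖ := by
  have hd : ⟪e, F - g⟫ = ⟪e, F⟫ - m := by rw [inner_sub_right, hg]
  have hsplit : g - m • e = (F - ⟪e, F⟫ • e) - (F - g - ⟪e, F - g⟫ • e) := by
    rw [hd, sub_smul]; abel
  have hd_norm : ‖F - g - ⟪e, F - g⟫ • e‖ ≤ √(ε ^ 2 - (⟪e, F⟫ - m) ^ 2) := by
    rw [← Real.sqrt_sq (norm_nonneg _), norm_sub_inner_smul_sq he, hd, norm_sub_rev]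
    exact Real.sqrt_le_sqrt (by nlinarith [norm_nonneg (g - F)])
  rw [hsplit]
  linarith [norm_sub_norm_le (F - ⟪e, F⟫ • e) (F - g - ⟪e, F - g⟫ • e)]

lemma inner_smul_sub_add_smul (he : ‖e‖ = 1) (F : E) (a m : ℝ) :
    ⟪e, a • (F - ⟪e, F⟫ • e) + m • e⟫ = m := by
  rw [inner_add_right, real_inner_smul_right, inner_sub_inner_smul_self he,
    real_inner_smul_right, real_inner_self_eq_norm_sq, he]
  ring

lemma norm_smul_sub_add_smul_sub_sq (he : ‖e‖ = 1) (F : E) (a m : ℝ) :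
    ‖a • (F - ⟪e, F⟫ • e) + m • e - F‖ ^ 2
      = (1 - a) ^ 2 * ‖F - ⟪e, F⟫ • e‖ ^ 2 + (⟪e, F⟫ - m) ^ 2 := by
  have hx : ⟪e, (a - 1) • (F - ⟪e, F⟫ • e)⟫ = 0 := by
    rw [real_inner_smul_right, inner_sub_inner_smul_self he, mul_zero]
  have := norm_add_smul_sq_of_inner_eq_zero he hx (m - ⟪e, F⟫)
  rw [show a • (F - ⟪e, F⟫ • e) + m • e - F
      = (a - 1) • (F - ⟪e, F⟫ • e) + (m - ⟪e, F⟫) • e by module, this, norm_smul,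
    mul_pow, Real.norm_eq_abs, sq_abs]
  ring

end UnitVector

section ConstantFunction

variable {α : Type*} [MeasurableSpace α] {μ : Measure α}

lemma Lp.const_eq_smul_const_one [IsFiniteMeasure μ] (c : ℝ) :
    Lp.const 2 μ c = c • Lp.const 2 μ (1 : ℝ) := by
  simpa using (Lp.constₗ 2 μ ℝ).map_smul c (1 : ℝ)

lemma integral_eq_inner_const_one [IsFiniteMeasure μ] (f : Lp ℝ 2 μ) :
    ∫ x, f x ∂μ = ⟪Lp.const 2 μ (1 : ℝ), f⟫ := by
  rw [← indicatorConstLp_univ, L2.inner_indicatorConstLp_one, Measure.restrict_univ]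

lemma Lp.norm_const_one [IsProbabilityMeasure μ] : ‖Lp.const 2 μ (1 : ℝ)‖ = 1 := by
  simp [Lp.norm_const']

end ConstantFunction

lemma Mqf.const_mem (c : ℝ) : Lp.const 2 μ01 c ∈ Mqf :=
  ⟨fun _ ↦ c, monotoneOn_const, Lp.coeFn_const ..⟩

lemma Mqf.add_mem {f g : Lp ℝ 2 μ01} (hf : f ∈ Mqf) (hg : g ∈ Mqf) : f + g ∈ Mqf := by
  obtain ⟨f₀, hf₀, hff₀⟩ := hf
  obtain ⟨g₀, hg₀, hgg₀⟩ := hg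
  refine ⟨f₀ + g₀, hf₀.add hg₀, ?_⟩
  filter_upwards [Lp.coeFn_add f g, hff₀, hgg₀] with x hx hfx hgx
  simp only [hx, Pi.add_apply, hfx, hgx]

lemma Mqf.smul_mem {a : ℝ} {g : Lp ℝ 2 μ01} (ha : 0 ≤ a) (hg : g ∈ Mqf) : a • g ∈ Mqf := by
  obtain ⟨g₀, hg₀, hgg₀⟩ := hg
  refine ⟨a • g₀, fun x hx y hy hxy ↦ smul_le_smul_of_nonneg_left (hg₀ hx hy hxy) ha, ?_⟩
  filter_upwards [Lp.coeFn_smul a g, hgg₀] with x hx hgx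
  simp only [hx, Pi.smul_apply, hgx]

theorem stmt2_general (F : Lp ℝ 2 μ01) (hF : F ∈ Mqf) (ε : ℝ)
    (mF s m : ℝ) (hmF : mF = ∫ u, F u ∂μ01)
    (hs : s = ‖F - Lp.const 2 μ01 mF‖) (hs0 : 0 < s)
    (hm : |mF - m| ≤ ε) :
    (s ≥ Real.sqrt (ε ^ 2 - (mF - m) ^ 2) →
      IsLeast
        ((fun g : Lp ℝ 2 μ01 => ‖g - Lp.const 2 μ01 m‖) ''
          {g ∈ Mball F ε | (∫ u, g u ∂μ01) = m})
        (s - Real.sqrt (ε ^ 2 - (mF - m) ^ 2)) ∧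
      (1 - Real.sqrt (ε ^ 2 - (mF - m) ^ 2) / s) • (F - Lp.const 2 μ01 mF) + Lp.const 2 μ01 m
        ∈ {g ∈ Mball F ε | (∫ u, g u ∂μ01) = m} ∧
      ‖(1 - Real.sqrt (ε ^ 2 - (mF - m) ^ 2) / s) • (F - Lp.const 2 μ01 mF) + Lp.const 2 μ01 m
          - Lp.const 2 μ01 m‖
        = s - Real.sqrt (ε ^ 2 - (mF - m) ^ 2)) ∧
    (s < Real.sqrt (ε ^ 2 - (mF - m) ^ 2) →
      Lp.const 2 μ01 m ∈ {g ∈ Mball F ε | (∫ u, g u ∂μ01) = m} ∧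
      IsLeast
        ((fun g : Lp ℝ 2 μ01 => ‖g - Lp.const 2 μ01 m‖) ''
          {g ∈ Mball F ε | (∫ u, g u ∂μ01) = m})
        0) := by
  obtain ⟨e, he, hconst, hint⟩ : ∃ e : Lp ℝ 2 μ01, ‖e‖ = 1 ∧
      (∀ c : ℝ, Lp.const 2 μ01 c = c • e) ∧ ∀ f : Lp ℝ 2 μ01, ∫ u, f u ∂μ01 = ⟪e, f⟫ :=
    ⟨_, Lp.norm_const_one, Lp.const_eq_smul_const_one, integral_eq_inner_const_one⟩
  have hcone : ∀ a : ℝ, 0 ≤ a → a • (F - mF • e) + m • e ∈ Mqf := fun a ha ↦ by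
    rw [sub_eq_add_neg, ← neg_smul, ← hconst, ← hconst]
    exact Mqf.add_mem (Mqf.smul_mem ha (Mqf.add_mem hF (Mqf.const_mem _))) (Mqf.const_mem _)
  simp only [hconst, hint] at hmF hs ⊢
  subst hmF
  set δ := √(ε ^ 2 - (⟪e, F⟫ - m) ^ 2)
  have hδ : δ ^ 2 = ε ^ 2 - (⟪e, F⟫ - m) ^ 2 := Real.sq_sqrt (by nlinarith [abs_le.1 hm])
  have hfeasible : ∀ a : ℝ, 0 ≤ a → (1 - a) ^ 2 * s ^ 2 ≤ δ ^ 2 →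
      a • (F - ⟪e, F⟫ • e) + m • e ∈ {g ∈ Mball F ε | ⟪e, g⟫ = m} := fun a ha hδa ↦ by
    refine ⟨⟨hcone a ha, ?_⟩, inner_smul_sub_add_smul he F a m⟩
    have hsq := norm_smul_sub_add_smul_sub_sq he F a m
    rw [← hs] at hsq
    nlinarith [norm_nonneg (a • (F - ⟪e, F⟫ • e) + m • e - F), (abs_nonneg _).trans hm]
  refine ⟨fun hsδ ↦ ?_, fun hsδ ↦ ?_⟩
  · have ha : 0 ≤ 1 - δ / s := sub_nonneg.2 ((div_le_one hs0).2 hsδ)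
    have hmem := hfeasible (1 - δ / s) ha <| by
      rw [sub_sub_cancel, div_pow, div_mul_cancel₀ _ (pow_ne_zero 2 hs0.ne')]
    have hnorm : ‖(1 - δ / s) • (F - ⟪e, F⟫ • e) + m • e - m • e‖ = s - δ := by
      rw [add_sub_cancel_right, norm_smul, Real.norm_of_nonneg ha, ← hs]
      field_simp
    refine ⟨⟨⟨_, hmem, hnorm⟩, ?_⟩, hmem, hnorm⟩
    rintro _ ⟨g, ⟨⟨-, hgF⟩, hg⟩, rfl⟩
    exact hs ▸ sub_sqrt_le_norm_sub_smul he hg hgF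
  · have hmem : m • e ∈ {g ∈ Mball F ε | ⟪e, g⟫ = m} := by
      simpa using hfeasible 0 le_rfl (by nlinarith)
    exact ⟨hmem, ⟨_, hmem, by simp⟩, fun _ ⟨_, _, hy⟩ ↦ hy ▸ norm_nonneg _⟩

theorem stmt2 (F : Lp ℝ 2 μ01) (hF : F ∈ Mqf) (ε : ℝ) (hε : 0 < ε)
    (mF s m : ℝ) (hmF : mF = ∫ u, F u ∂μ01)
    (hs : s = ‖F - Lp.const 2 μ01 mF‖) (hs0 : 0 < s)
    (hm : |mF - m| ≤ ε) :
    (s ≥ Real.sqrt (ε ^ 2 - (mF - m) ^ 2) →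
      IsLeast
        ((fun g : Lp ℝ 2 μ01 => ‖g - Lp.const 2 μ01 m‖) ''
          {g ∈ Mball F ε | (∫ u, g u ∂μ01) = m})
        (s - Real.sqrt (ε ^ 2 - (mF - m) ^ 2)) ∧
      (1 - Real.sqrt (ε ^ 2 - (mF - m) ^ 2) / s) • (F - Lp.const 2 μ01 mF) + Lp.const 2 μ01 m
        ∈ {g ∈ Mball F ε | (∫ u, g u ∂μ01) = m} ∧
      ‖(1 - Real.sqrt (ε ^ 2 - (mF - m) ^ 2) / s) • (F - Lp.const 2 μ01 mF) + Lp.const 2 μ01 m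
          - Lp.const 2 μ01 m‖
        = s - Real.sqrt (ε ^ 2 - (mF - m) ^ 2)) ∧
    (s < Real.sqrt (ε ^ 2 - (mF - m) ^ 2) →
      Lp.const 2 μ01 m ∈ {g ∈ Mball F ε | (∫ u, g u ∂μ01) = m} ∧
      IsLeast
        ((fun g : Lp ℝ 2 μ01 => ‖g - Lp.const 2 μ01 m‖) ''
          {g ∈ Mball F ε | (∫ u, g u ∂μ01) = m})
        0) :=
  stmt2_general F hF ε mF s m hmF hs hs0 hm
end
end
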